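/- arXiv:math/0404399 — 4 statements merged into one kernel-verified Lean document; each statement's English description precedes it below -/
import Mathlib

section
/- Let R be a principal ideal domain, P a finitely generated R-module, and M_1 ⊇ M_2 ⊇ M_3 ⊇ ... a descending chain of submodules of P such that for each n there is an R-module homomorphism r_n : P → M_n restricting to the identity on M_{n+1} (i.e., M_{n+1} is a retract of P inside M_n). Then the chain stabilizes: there exists k with M_n = M_k for all n ≥ k. -/
/-! Since `finrank R (M n)` decreases, from some point on every `M n / M m` is torsion; and since
the torsion submodule of `P` is Artinian (it is finitely generated and killed by a nonzero element
of a one-dimensional Noetherian ring), the chain `M n ⊓ torsion R P` stabilizes as well. Past both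
points, take `x ∈ M k` and `a ≠ 0` with `a • x ∈ M (n + 1)`: the retraction `r n` fixes `a • x`, so
`x - r n x` is a torsion element of `M k`, hence lies in `M n`, and so does `x`. -/

open Module Submodule
open scoped nonZeroDivisors

theorem isArtinian_of_isTorsion {R M : Type*} [CommRing R] [IsNoetherianRing R]
    [Ring.KrullDimLE 1 R] [AddCommGroup M] [Module R M] [Module.Finite R M]
    (hM : Module.IsTorsion R M) : IsArtinian R M := by
  obtain ⟨a, ha_ann, ha⟩ := annihilator_top_inter_nonZeroDivisors hM
  have hkill : IsTorsionBy R M a := fun x => mem_annihilator.mp ha_ann x mem_top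
  let := hkill.module
  have : IsArtinian R (R ⧸ Ideal.span {a}) :=
    (isFiniteLength_iff_isNoetherian_isArtinian.mp (isFiniteLength_quotient_span_singleton R ha)).2
  have : IsArtinianRing (R ⧸ Ideal.span {a}) := isArtinian_of_tower R this
  have : Module.Finite (R ⧸ Ideal.span {a}) M := .of_restrictScalars_finite R _ M
  exact isArtinian_of_surjective_algebraMap (Ideal.Quotient.mk_surjective (I := .span {a}))

theorem Submodule.exists_smul_mem_of_finrank_eq {R P : Type*} [CommRing R] [IsDomain R]
    [AddCommGroup P] [Module R P] {A B : Submodule R P} [Module.Finite R B] (hAB : A ≤ B)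
    (hrank : finrank R A = finrank R B) {x : P} (hx : x ∈ B) : ∃ a ∈ R⁰, a • x ∈ A := by
  set A' := A.comap B.subtype
  have hquot : finrank R (B ⧸ A') = 0 := by
    have := A'.finrank_quotient_add_finrank
    rw [(comapSubtypeEquivOfLe hAB).finrank_eq, hrank] at this
    omega
  obtain ⟨a, ha, hax⟩ := finrank_eq_zero_iff.mp hquot (A'.mkQ ⟨x, hx⟩)
  refine ⟨a, mem_nonZeroDivisors_of_ne_zero ha, ?_⟩
  rwa [← map_smul, mkQ_apply, Quotient.mk_eq_zero] at hax

theorem Submodule.le_of_retract {R P : Type*} [CommRing R] [AddCommGroup P] [Module R P]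
    {A B C : Submodule R P} (r : P →ₗ[R] P) (hBA : B ≤ A) (hr : LinearMap.range r ≤ B)
    (hfix : ∀ x ∈ C, r x = x) (hsat : ∀ x ∈ A, ∃ a ∈ R⁰, a • x ∈ C)
    (htors : A ⊓ torsion R P ≤ B) : A ≤ B := by
  intro x hx
  obtain ⟨a, ha, hax⟩ := hsat x hx
  have hrx : r x ∈ B := hr ⟨x, rfl⟩
  have hdefect : x - r x ∈ torsion R P :=
    (mem_torsion_iff _).mpr ⟨⟨a, ha⟩, by simp [smul_sub, ← map_smul, hfix _ hax]⟩
  simpa using B.add_mem hrx (htors ⟨A.sub_mem hx (hBA hrx), hdefect⟩)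

/-- Descending chains of submodules of a finitely generated module over a PID,
each of which is a retract of the ambient module inside the previous one,
stabilize. -/
theorem fg_module_retract_chain_stabilizes
    {R : Type*} [CommRing R] [IsDomain R] [IsPrincipalIdealRing R]
    {P : Type*} [AddCommGroup P] [Module R P] [Module.Finite R P]
    (M : ℕ → Submodule R P) (hdesc : ∀ n, M (n + 1) ≤ M n)
    (r : ℕ → (P →ₗ[R] P))
    (hrange : ∀ n, LinearMap.range (r n) ≤ M n)
    (hfix : ∀ n, ∀ x ∈ M (n + 1), r n x = x) :
    ∃ k, ∀ n ≥ k, M n = M k := by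
  have hM : Antitone M := antitone_nat_of_succ_le hdesc
  set T := torsion R P
  have : IsArtinian R T := isArtinian_of_isTorsion torsion_isTorsion
  obtain ⟨k₁, hk₁⟩ := WellFoundedLT.antitone_chain_condition
    (f := fun n => finrank R (M n)) fun _ _ h => finrank_mono (hM h)
  obtain ⟨k₂, hk₂⟩ := WellFoundedLT.antitone_chain_condition
    (f := fun n => (M n).comap T.subtype) fun _ _ h => comap_mono (hM h)
  refine ⟨max k₁ k₂, fun n hn => le_antisymm (hM hn) ?_⟩
  refine le_of_retract (r n) (hM hn) (hrange n) (hfix n) (fun x hx => ?_) ?_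
  · refine exists_smul_mem_of_finrank_eq (hM (by omega)) ?_ hx
    exact (hk₁ (n + 1) (by omega)).symm.trans (hk₁ (max k₁ k₂) (by omega))
  · rintro x ⟨hxM, hxT⟩
    have hcomap := (hk₂ (max k₁ k₂) (by omega)).symm.trans (hk₂ n (by omega))
    exact (SetLike.ext_iff.mp hcomap ⟨x, hxT⟩).mp hxM
end

section
/- Let R be a principal ideal domain, let Q be a finitely generated torsion-free R-module, let N ≤ M ≤ Q be free R-modules of the same finite rank, and let s : Q → M be an R-linear map with s|_N = id_N. Then the quotient of M by the fixed submodule {x ∈ M | s(x) = x} is torsion-free, and hence M = {x ∈ M | s(x) = x}. -/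
/-- Let `Q` be a finitely generated torsion-free module over a PID and
`N ≤ M ≤ Q` submodules of the same (full) rank. If `s : Q → Q` is linear with
range contained in `M` and `s` fixes `N` pointwise, then `s` fixes all of `M`. -/
theorem full_rank_retraction_fixes_everything
    {R : Type*} [CommRing R] [IsDomain R] [IsPrincipalIdealRing R]
    {Q : Type*} [AddCommGroup Q] [Module R Q] [Module.Finite R Q]
    [NoZeroSMulDivisors R Q]
    (N M : Submodule R Q) (hNM : N ≤ M)
    (hrankN : Module.finrank R N = Module.finrank R Q)
    (hrankM : Module.finrank R M = Module.finrank R Q)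
    (s : Q →ₗ[R] Q) (hrange : LinearMap.range s ≤ M)
    (hfix : ∀ x ∈ N, s x = x) :
    ∀ x ∈ M, s x = x := by
  have hrk : Module.rank R (Q ⧸ N) = 0 := by
    have h := rank_quotient_add_rank_of_isDomain N
    have h1 : Module.rank R N = Module.rank R Q := by
      rw [← Module.finrank_eq_rank, ← Module.finrank_eq_rank, hrankN]
    rw [h1] at h
    have hfin : Module.rank R Q < Cardinal.aleph0 := Module.rank_lt_aleph0 R Q
    exact (Cardinal.add_right_inj_of_lt_aleph0 hfin).mp (by rw [zero_add]; exact h)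
  have htor : ∀ x : Q, ∃ r : R, r ≠ 0 ∧ r • x ∈ N := by
    intro x
    obtain ⟨r, hr, hrx⟩ := rank_eq_zero_iff.mp hrk (Submodule.Quotient.mk x)
    refine ⟨r, hr, ?_⟩
    rwa [← Submodule.Quotient.mk_smul, Submodule.Quotient.mk_eq_zero] at hrx
  intro x hx
  obtain ⟨r, hr, hrx⟩ := htor x
  have := hfix _ hrx
  rw [map_smul] at this
  exact smul_right_injective Q hr this
end

section
/- Let G be a divisible abelian group of finite rank, X_1 ⊇ X_2 ⊇ X_3 ⊇ ... a descending chain of subgroups of G such that for each n there is a group homomorphism r_n : G → X_n restricting to the identity on X_{n+1}. Then the chain stabilizes: there exists k with X_n = X_k for all n ≥ k. -/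
/-- `S` is an independent subset of the abelian group `G` (in the sense of
Fuchs): every vanishing integral combination has all its terms vanishing. -/
def IsIndepSet {G : Type*} [AddCommGroup G] (S : Set G) : Prop :=
  ∀ s : Finset G, ↑s ⊆ S → ∀ c : G → ℤ,
    (∑ a ∈ s, c a • a) = 0 → ∀ a ∈ s, c a • a = 0

/-- `G` has finite rank: there is a bound on the cardinality of independent
subsets consisting of elements of prime or infinite order. -/
def HasFiniteRank (G : Type*) [AddCommGroup G] : Prop :=
  ∃ r : ℕ, ∀ s : Finset G, IsIndepSet (G := G) ↑s →
    (∀ a ∈ s, (addOrderOf a).Prime ∨ addOrderOf a = 0) → s.card ≤ r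

section Aux

variable {G : Type*} [AddCommGroup G]

/-- Given a divisible subgroup `D'` properly contained in a subgroup `D`, we can find an
element of `D \ D'` of prime or infinite order whose multiples meet `D'` only at `0`. -/
lemma exists_good_elt {D' D : AddSubgroup G}
    (hdiv' : ∀ g ∈ D', ∀ n : ℕ, 0 < n → ∃ h ∈ D', n • h = g)
    (hle : D' ≤ D) {x : G} (hxD : x ∈ D) (hxD' : x ∉ D') :
    ∃ y ∈ D, y ∉ D' ∧ ((addOrderOf y).Prime ∨ addOrderOf y = 0) ∧
      ∀ c : ℤ, c • y ∈ D' → c • y = 0 := by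
  classical
  set π : G →+ G ⧸ D' := QuotientAddGroup.mk' D' with hπ
  have hker : ∀ g : G, π g = 0 ↔ g ∈ D' := fun g => QuotientAddGroup.eq_zero_iff g
  have hx0 : π x ≠ 0 := fun h => hxD' ((hker x).1 h)
  by_cases hord : addOrderOf (π x) = 0
  · -- infinite order case
    refine ⟨x, hxD, hxD', Or.inr ?_, ?_⟩
    · rw [addOrderOf_eq_zero_iff']
      intro n hn hnx
      exact (addOrderOf_eq_zero_iff'.1 hord n hn) (by rw [← map_nsmul, hnx, map_zero])
    · intro c hc
      have h1 : c • π x = 0 := by rw [← map_zsmul]; exact (hker _).2 hc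
      have hc0 : c = 0 := by
        by_contra hc0
        have hn : 0 < c.natAbs := Int.natAbs_pos.2 hc0
        refine (addOrderOf_eq_zero_iff'.1 hord c.natAbs hn) ?_
        rcases Int.natAbs_eq c with h | h
        · rw [← natCast_zsmul, ← h, h1]
        · rw [← natCast_zsmul, ← neg_neg ((c.natAbs : ℤ) • π x), ← neg_zsmul, ← h, h1, neg_zero]
      rw [hc0, zero_zsmul]
  · -- finite order case: produce an element of prime order
    set n : ℕ := addOrderOf (π x) with hn
    have hn1 : n ≠ 1 := fun h => hx0 (AddMonoid.addOrderOf_eq_one_iff.1 h)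
    set p : ℕ := n.minFac with hp
    have hpprime : p.Prime := Nat.minFac_prime hn1
    have hpdvd : p ∣ n := Nat.minFac_dvd n
    have hnpne : n / p ≠ 0 := by
      have h1 : 0 < n := Nat.pos_of_ne_zero hord
      have := Nat.div_pos (Nat.le_of_dvd h1 hpdvd) hpprime.pos
      omega
    set q : G := (n / p) • x with hq
    have hqD : q ∈ D := AddSubgroup.nsmul_mem D hxD _
    have hπq : addOrderOf (π q) = p := by
      rw [hq, map_nsmul, addOrderOf_nsmul' _ hnpne, ← hn,
        Nat.gcd_eq_right (Nat.div_dvd_of_dvd hpdvd),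
        Nat.div_div_self hpdvd hord]
    have hpq : p • q ∈ D' := by
      rw [← hker, map_nsmul]
      rw [← hπq]
      exact addOrderOf_nsmul_eq_zero (π q)
    obtain ⟨z, hzD', hz⟩ := hdiv' _ hpq p hpprime.pos
    refine ⟨q - z, sub_mem hqD (hle hzD'), ?_, ?_, ?_⟩
    · intro h
      have : q ∈ D' := by
        have := add_mem h hzD'
        simpa using this
      have h0 : π q = 0 := (hker _).2 this
      rw [h0, addOrderOf_zero] at hπq
      exact hpprime.ne_one hπq.symm
    all_goals {
      have hπy : π (q - z) = π q := by
        rw [map_sub, (hker z).2 hzD', sub_zero]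
      have hpy : p • (q - z) = 0 := by
        rw [smul_sub, hz, sub_self]
      have hy0 : q - z ≠ 0 := by
        intro h
        have : π q = 0 := by rw [← hπy, h, map_zero]
        rw [this, addOrderOf_zero] at hπq
        exact hpprime.ne_one hπq.symm
      have hordy : addOrderOf (q - z) = p := by
        have hdvd : addOrderOf (q - z) ∣ p := addOrderOf_dvd_of_nsmul_eq_zero hpy
        rcases (Nat.Prime.eq_one_or_self_of_dvd hpprime _ hdvd) with h | h
        · exact absurd (AddMonoid.addOrderOf_eq_one_iff.1 h) hy0
        · exact h
      first
      | exact Or.inl (hordy ▸ hpprime)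
      | { intro c hc
          have h1 : c • π (q - z) = 0 := by rw [← map_zsmul]; exact (hker _).2 hc
          have hdvd : (p : ℤ) ∣ c := by
            rw [← hπq, ← hπy]
            exact (addOrderOf_dvd_iff_zsmul_eq_zero).2 h1
          obtain ⟨d, rfl⟩ := hdvd
          rw [mul_comm, mul_zsmul, natCast_zsmul, hpy, smul_zero] }
    }

/-- Inserting a suitable new element preserves independence. -/
lemma isIndepSet_insert [DecidableEq G] {D' : AddSubgroup G} {s : Finset G}
    (hs : ↑s ⊆ (D' : Set G)) (hindep : IsIndepSet (↑s : Set G)) {y : G} (hy' : y ∉ D')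
    (hy : ∀ c : ℤ, c • y ∈ D' → c • y = 0) :
    IsIndepSet (↑(insert y s) : Set G) := by
  classical
  intro t ht c hsum a ha
  by_cases hyt : y ∈ t
  · have hterase : ↑(t.erase y) ⊆ (↑s : Set G) := by
      intro b hb
      obtain ⟨hbne, hbt⟩ := Finset.mem_erase.1 hb
      have := ht hbt
      rw [Finset.coe_insert, Set.mem_insert_iff] at this
      exact this.resolve_left hbne
    have hsplit : c y • y + ∑ b ∈ t.erase y, c b • b = 0 := by
      rw [← Finset.add_sum_erase t (fun b => c b • b) hyt] at hsum
      exact hsum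
    have hmem : c y • y ∈ D' := by
      rw [eq_neg_of_add_eq_zero_left hsplit]
      exact neg_mem (sum_mem fun b hb => D'.zsmul_mem (hs (hterase hb)) _)
    have hy0 : c y • y = 0 := hy _ hmem
    have hrest : ∑ b ∈ t.erase y, c b • b = 0 := by rwa [hy0, zero_add] at hsplit
    have hall := hindep (t.erase y) hterase c hrest
    rcases eq_or_ne a y with rfl | hay
    · exact hy0
    · exact hall a (Finset.mem_erase.2 ⟨hay, ha⟩)
  · have hts : ↑t ⊆ (↑s : Set G) := by
      intro b hb
      have := ht hb
      rw [Finset.coe_insert, Set.mem_insert_iff] at this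
      rcases this with rfl | h
      · exact absurd hb hyt
      · exact h
    exact hindep t hts c hsum a ha

end Aux

/-- In a divisible abelian group of finite rank, a descending chain of
subgroups each of which is a retract of `G` inside the previous one
stabilizes. -/
theorem divisible_finite_rank_retract_chain_stabilizes
    {G : Type*} [AddCommGroup G]
    (hdiv : ∀ g : G, ∀ n : ℕ, 0 < n → ∃ h : G, n • h = g)
    (hrank : HasFiniteRank G)
    (X : ℕ → AddSubgroup G) (hdesc : ∀ n, X (n + 1) ≤ X n)
    (r : ℕ → (G →+ G))
    (hrange : ∀ n, (r n).range ≤ X n)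
    (hfix : ∀ n, ∀ x ∈ X (n + 1), r n x = x) :
    ∃ k, ∀ n ≥ k, X n = X k := by
  classical
  obtain ⟨R, hR⟩ := hrank
  -- the set of cardinalities of good independent sets inside a subgroup
  set C : AddSubgroup G → Set ℕ := fun D =>
    {m | ∃ s : Finset G, ↑s ⊆ (D : Set G) ∧ IsIndepSet (↑s : Set G) ∧
      (∀ a ∈ s, (addOrderOf a).Prime ∨ addOrderOf a = 0) ∧ s.card = m} with hC
  have hC0 : ∀ D, 0 ∈ C D := by
    intro D
    refine ⟨∅, by simp, ?_, by simp, by simp⟩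
    intro t ht c hsum a ha
    exact absurd (ht ha) (by simp)
  have hbdd : ∀ D, BddAbove (C D) := by
    intro D
    exact ⟨R, fun m ⟨s, _, h2, h3, h4⟩ => h4 ▸ hR s h2 h3⟩
  set N : AddSubgroup G → ℕ := fun D => sSup (C D) with hN
  have hNmem : ∀ D, N D ∈ C D := fun D => Nat.sSup_mem ⟨0, hC0 D⟩ (hbdd D)
  have hNmono : ∀ {D1 D2 : AddSubgroup G}, D1 ≤ D2 → N D1 ≤ N D2 := by
    intro D1 D2 h
    refine csSup_le_csSup (hbdd D2) ⟨0, hC0 D1⟩ ?_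
    rintro m ⟨s, h1, h2, h3, h4⟩
    exact ⟨s, fun a ha => h (h1 ha), h2, h3, h4⟩
  have hNstrict : ∀ {D1 D2 : AddSubgroup G},
      (∀ g ∈ D1, ∀ n : ℕ, 0 < n → ∃ h ∈ D1, n • h = g) → D1 < D2 → N D1 < N D2 := by
    intro D1 D2 hdiv1 hlt
    obtain ⟨s, hs1, hs2, hs3, hs4⟩ := hNmem D1
    obtain ⟨x, hxD2, hxD1⟩ := SetLike.exists_of_lt hlt
    obtain ⟨y, hyD2, hyD1, hyord, hy⟩ := exists_good_elt hdiv1 hlt.le hxD2 hxD1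
    have hys : y ∉ s := fun h => hyD1 (hs1 h)
    have hins : (insert y s).card = N D1 + 1 := by
      rw [Finset.card_insert_of_notMem hys, hs4]
    have hmem : N D1 + 1 ∈ C D2 := by
      refine ⟨insert y s, ?_, isIndepSet_insert hs1 hs2 hyD1 hy, ?_, hins⟩
      · intro a ha
        rw [Finset.coe_insert, Set.mem_insert_iff] at ha
        rcases ha with rfl | ha
        · exact hyD2
        · exact hlt.le (hs1 ha)
      · intro a ha
        rcases Finset.mem_insert.1 ha with rfl | ha
        · exact hyord
        · exact hs3 a ha
    exact Nat.lt_of_succ_le (le_csSup (hbdd D2) hmem)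
  -- the divisible subgroups squeezed in the chain
  set D : ℕ → AddSubgroup G := fun n => (r n).range with hD
  have hDdiv : ∀ n, ∀ g ∈ D n, ∀ m : ℕ, 0 < m → ∃ h ∈ D n, m • h = g := by
    rintro n g ⟨x, rfl⟩ m hm
    obtain ⟨h, hh⟩ := hdiv x m hm
    exact ⟨r n h, ⟨h, rfl⟩, by rw [← map_nsmul, hh]⟩
  have hXD : ∀ n, X (n + 1) ≤ D n := fun n x hx => ⟨x, hfix n x hx⟩
  have hDX : ∀ n, D n ≤ X n := hrange
  have hDD : ∀ n, D (n + 1) ≤ D n := fun n => (hDX (n + 1)).trans (hXD n)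
  -- minimize N ∘ D
  have hSne : (Set.range fun n => N (D n)).Nonempty := ⟨N (D 0), 0, rfl⟩
  obtain ⟨k, hk⟩ := Nat.sInf_mem hSne
  have hkmin : ∀ n, N (D k) ≤ N (D n) := by
    intro n
    exact le_trans (le_of_eq hk) (Nat.sInf_le ⟨n, rfl⟩)
  have hmono : ∀ n m, n ≤ m → N (D m) ≤ N (D n) := by
    intro n m h
    induction m with
    | zero =>
      have : n = 0 := by omega
      subst this; exact le_rfl
    | succ m ih =>
      rcases Nat.lt_or_ge n (m + 1) with h' | h'
      · exact (hNmono (hDD m)).trans (ih (by omega))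
      · have : n = m + 1 := by omega
        subst this; exact le_rfl
  have hconst : ∀ n, k ≤ n → N (D n) = N (D k) :=
    fun n hn => le_antisymm (hmono k n hn) (hkmin n)
  have hDstab : ∀ n, k ≤ n → D n = D k := by
    intro n hn
    induction n with
    | zero => have : k = 0 := by omega
              subst this; rfl
    | succ m ih =>
      rcases Nat.lt_or_ge k (m + 1) with h' | h'
      · have hm : k ≤ m := by omega
        rw [← ih hm]
        by_contra hne
        have hlt : D (m + 1) < D m := lt_of_le_of_ne (hDD m) hne
        have := hNstrict (hDdiv (m + 1)) hlt
        rw [hconst (m + 1) (by omega), hconst m hm] at this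
        omega
      · have : k = m + 1 := by omega
        subst this; rfl
  have hXeq : ∀ n, k ≤ n → X (n + 1) = D k := by
    intro n hn
    refine le_antisymm ?_ ?_
    · rw [← hDstab n hn]; exact hXD n
    · rw [← hDstab (n + 1) (by omega)]; exact hrange (n + 1)
  refine ⟨k + 1, ?_⟩
  intro n hn
  obtain ⟨m, rfl⟩ : ∃ m, n = m + 1 := ⟨n - 1, by omega⟩
  rw [hXeq m (by omega), hXeq k le_rfl]
end

section
/- Let P be a finitely generated abelian group and M_1 ⊇ M_2 ⊇ M_3 ⊇ ... a descending chain of subgroups such that for each n there exists a homomorphism r_n : P → M_n fixing M_{n+1} pointwise. Then the chain stabilizes. -/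
/-!
Eventually both the rank of `M n` and its torsion part `torsion ⊓ M n` stop changing (the torsion
of a finitely generated abelian group is finite). From then on, every `a ∈ M n` has a nonzero
multiple `c • a ∈ M (n + 2)`, which `r (n + 1)` fixes; so `r (n + 1) a - a` is a torsion element
of `M n`, hence of `M (n + 1)`, and `a = r (n + 1) a - (r (n + 1) a - a) ∈ M (n + 1)`.
-/

open Module Submodule
open scoped nonZeroDivisors

section

variable {R P : Type*} [CommRing R] [AddCommGroup P] [Module R P]

theorem Submodule.le_of_retraction_of_torsion_inf_le {N N' N'' : Submodule R P}
    (f : P →ₗ[R] P) (hN' : N' ≤ N) (hf : LinearMap.range f ≤ N') (hfix : ∀ x ∈ N'', f x = x)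
    (htors : torsion R P ⊓ N ≤ N') (hsmul : ∀ a ∈ N, ∃ c ∈ R⁰, c • a ∈ N'') : N ≤ N' := by
  intro a ha
  obtain ⟨c, hc, hca⟩ := hsmul a ha
  have hfa : f a ∈ N' := hf ⟨a, rfl⟩
  have hdefect : f a - a ∈ torsion R P := by
    refine (mem_torsion_iff _).mpr ⟨⟨c, hc⟩, ?_⟩
    rw [Submonoid.mk_smul, smul_sub, ← map_smul, hfix _ hca, sub_self]
  have hdefect' : f a - a ∈ N' := htors ⟨hdefect, sub_mem (hN' hfa) ha⟩
  simpa only [sub_sub_cancel] using sub_mem hfa hdefect'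

theorem Submodule.exists_forall_torsion_inf_eq_of_antitone [IsArtinian R (torsion R P)]
    {S : ℕ → Submodule R P} (hS : Antitone S) :
    ∃ k, ∀ n ≥ k, torsion R P ⊓ S n = torsion R P ⊓ S k := by
  obtain ⟨k, hk⟩ := WellFoundedLT.antitone_chain_condition
    (f := fun n => (S n).comap (torsion R P).subtype) fun m n hmn => comap_mono (hS hmn)
  refine ⟨k, fun n hn => ?_⟩
  rw [← map_comap_subtype, ← map_comap_subtype, ← hk n hn]

variable [IsDomain R]

theorem Submodule.exists_smul_mem_of_le_of_finrank_le {N N' : Submodule R P} [Module.Finite R N']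
    (hle : N ≤ N') (hrank : finrank R N' ≤ finrank R N) :
    ∀ a ∈ N', ∃ c : R, c ≠ 0 ∧ c • a ∈ N := by
  set Q := N.comap N'.subtype
  have hQ : finrank R Q = finrank R N := (comapSubtypeEquivOfLe hle).finrank_eq
  have hquot : finrank R (N' ⧸ Q) = 0 := by
    have := Q.finrank_quotient_add_finrank
    omega
  intro a ha
  obtain ⟨c, hc, hca⟩ := finrank_eq_zero_iff.mp hquot (Submodule.Quotient.mk ⟨a, ha⟩)
  refine ⟨c, hc, ?_⟩
  rwa [← Submodule.Quotient.mk_smul, Submodule.Quotient.mk_eq_zero] at hca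

theorem Submodule.exists_forall_smul_mem_of_antitone [IsNoetherian R P] {S : ℕ → Submodule R P}
    (hS : Antitone S) : ∃ k, ∀ n ≥ k, ∀ a ∈ S k, ∃ c : R, c ≠ 0 ∧ c • a ∈ S n := by
  obtain ⟨k, hk⟩ := WellFoundedLT.antitone_chain_condition
    (f := fun n => finrank R (S n)) fun m n hmn => finrank_mono (hS hmn)
  exact ⟨k, fun n hn => exists_smul_mem_of_le_of_finrank_le (hS hn) (hk n hn).le⟩

theorem Submodule.exists_forall_eq_of_antitone_of_retractions [IsNoetherian R P]
    [IsArtinian R (torsion R P)] {S : ℕ → Submodule R P} (hS : Antitone S)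
    (f : ℕ → P →ₗ[R] P) (hrange : ∀ n, LinearMap.range (f n) ≤ S n)
    (hfix : ∀ n, ∀ x ∈ S (n + 1), f n x = x) : ∃ k, ∀ n ≥ k, S n = S k := by
  obtain ⟨k₁, hrank⟩ := exists_forall_smul_mem_of_antitone hS
  obtain ⟨k₂, htors⟩ := exists_forall_torsion_inf_eq_of_antitone hS
  have hstep : ∀ n ≥ max k₁ k₂, S (n + 1) = S n := by
    intro n hn
    refine (hS n.le_succ).antisymm (le_of_retraction_of_torsion_inf_le (f (n + 1))
      (hS n.le_succ) (hrange (n + 1)) (hfix (n + 1)) ?_ fun a ha => ?_)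
    · rw [htors n (le_of_max_le_right hn), ← htors (n + 1) (by omega)]
      exact inf_le_right
    · obtain ⟨c, hc, hca⟩ := hrank (n + 2) (by omega) a (hS (le_of_max_le_left hn) ha)
      exact ⟨c, mem_nonZeroDivisors_of_ne_zero hc, hca⟩
  exact ⟨max k₁ k₂, fun n hn => Nat.le_induction rfl (fun n hn ih => (hstep n hn).trans ih) n hn⟩

end

/-- In a finitely generated abelian group `P`, a descending chain of subgroups
each of which is a retract of `P` inside the previous one stabilizes. -/
theorem fg_abelian_retract_chain_stabilizes
    {P : Type*} [AddCommGroup P] [AddGroup.FG P]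
    (M : ℕ → AddSubgroup P) (hdesc : ∀ n, M (n + 1) ≤ M n)
    (r : ℕ → (P →+ P))
    (hrange : ∀ n, (r n).range ≤ M n)
    (hfix : ∀ n, ∀ x ∈ M (n + 1), r n x = x) :
    ∃ k, ∀ n ≥ k, M n = M k := by
  have : Module.Finite ℤ P := Module.Finite.iff_addGroup_fg.mpr ‹_›
  have : Finite (torsion ℤ P) := Module.finite_of_fg_torsion _ torsion_isTorsion
  have : IsArtinian ℤ (torsion ℤ P) := isArtinian_of_finite
  obtain ⟨k, hk⟩ := exists_forall_eq_of_antitone_of_retractions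
    (S := fun n => (M n).toIntSubmodule) (antitone_nat_of_succ_le hdesc)
    (fun n => (r n).toIntLinearMap) hrange hfix
  exact ⟨k, fun n hn => AddSubgroup.toIntSubmodule.injective (hk n hn)⟩
end
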